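/- arXiv:1712.10041 — 2 statements merged into one kernel-verified Lean document; each statement's English description precedes it below -/
import Mathlib

section
/- Let requests follow the Zipf law with parameter β > 1 on n contents and suppose the cache size M(n) and freshness parameter F(n) satisfy M(n) = ω(1) and F(n) = ω(1). Then the LP hit probability P_LP(n) = ∑_{i=1}^{M(n)} (F(n)-1)p_i² / (1+(F(n)-1)p_i) converges to 1 as n → ∞. -/
open Finset Filter Topology

/-!
Write `c = F(n) - 1` and `p = wᵢ / zₙ`, where `wᵢ = (i+1)^(-β)` and `zₙ = ∑_{k<n} wₖ → ∑ w`. Each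
summand `c p² / (1 + c p)` lies between `p - 1/c` and `p`, so for fixed `i` it tends to
`wᵢ / ∑ w` as `c → ∞` and `M(n) → ∞`, while it is dominated by `2 wᵢ / ∑ w` once
`zₙ ≥ (∑ w) / 2`. Tannery's theorem (dominated convergence for series) then gives the limit
`∑ wᵢ / ∑ w = 1`.
-/

noncomputable def lpHitTerm (c p : ℝ) : ℝ := c * p ^ 2 / (1 + c * p)

section lpHitTerm

variable {c p : ℝ}

lemma sub_lpHitTerm (hc : 0 ≤ c) (hp : 0 ≤ p) : p - lpHitTerm c p = p / (1 + c * p) := by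
  have : 0 < 1 + c * p := by positivity
  unfold lpHitTerm
  field_simp
  ring

lemma lpHitTerm_le (hc : 0 ≤ c) (hp : 0 ≤ p) : lpHitTerm c p ≤ p := by
  have : 0 ≤ p - lpHitTerm c p := by rw [sub_lpHitTerm hc hp]; positivity
  linarith

lemma sub_lpHitTerm_le_inv (hc : 0 < c) (hp : 0 ≤ p) : p - lpHitTerm c p ≤ c⁻¹ := by
  rw [sub_lpHitTerm hc.le hp, div_le_iff₀ (by positivity)]
  calc p = c⁻¹ * (c * p) := by field_simp
    _ ≤ c⁻¹ * (1 + c * p) := by gcongr; linarith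

lemma tendsto_lpHitTerm {α : Type*} {l : Filter α} {c p : α → ℝ} {p₀ : ℝ}
    (hc : Tendsto c l atTop) (hp : Tendsto p l (𝓝 p₀)) (hp₀ : ∀ᶠ a in l, 0 ≤ p a) :
    Tendsto (fun a => lpHitTerm (c a) (p a)) l (𝓝 p₀) := by
  have hlower : Tendsto (fun a => p a - (c a)⁻¹) l (𝓝 p₀) := by
    simpa using hp.sub (tendsto_inv_atTop_zero.comp hc)
  refine tendsto_of_tendsto_of_tendsto_of_le_of_le' hlower hp ?_ ?_
  · filter_upwards [hc.eventually_gt_atTop 0, hp₀] with a hca hpa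
    linarith [sub_lpHitTerm_le_inv hca hpa]
  · filter_upwards [hc.eventually_ge_atTop 0, hp₀] with a hca hpa
    exact lpHitTerm_le hca hpa

end lpHitTerm

theorem tendsto_sum_lpHitTerm_of_summable {w : ℕ → ℝ} (hw : ∀ i, 0 ≤ w i) (hws : Summable w)
    (hL : 0 < ∑' i, w i) {z : ℕ → ℝ} (hz : Tendsto z atTop (𝓝 (∑' i, w i)))
    {m : ℕ → ℕ} (hm : Tendsto m atTop atTop) {c : ℕ → ℝ} (hc : Tendsto c atTop atTop) :
    Tendsto (fun n => ∑ i ∈ range (m n), lpHitTerm (c n) (w i / z n)) atTop (𝓝 1) := by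
  set L := ∑' i, w i
  have hlim : ∑' i, w i / L = 1 := by rw [tsum_div_const, div_self hL.ne']
  rw [← hlim]
  refine (tendsto_tsum_of_dominated_convergence (bound := fun i => w i / (L / 2))
    (hws.div_const _) (fun i => ?_) ?_).congr fun n => (sum_eq_tsum_indicator _ _).symm
  · refine (tendsto_lpHitTerm hc (tendsto_const_nhds.div hz hL.ne') ?_).congr' ?_
    · filter_upwards [hz.eventually_const_lt hL] with n hzn using div_nonneg (hw i) hzn.le
    · filter_upwards [hm.eventually_gt_atTop i] with n hn
      rw [Set.indicator_of_mem (mem_coe.2 (mem_range.2 hn))]; rfl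
  · filter_upwards [hz.eventually_const_lt (half_lt_self hL), hc.eventually_ge_atTop 0]
      with n hzn hcn i
    have hL2 : 0 < L / 2 := by positivity
    have hp : 0 ≤ w i / z n := div_nonneg (hw i) (hL2.trans hzn).le
    refine (norm_indicator_le_norm_self _ _).trans ?_
    rw [Real.norm_of_nonneg (by unfold lpHitTerm; positivity)]
    calc lpHitTerm (c n) (w i / z n) ≤ w i / z n := lpHitTerm_le hcn hp
      _ ≤ w i / (L / 2) := div_le_div_of_nonneg_left (hw i) hL2 hzn.le

lemma Finset.sum_Icc_one_eq_sum_range {M : Type*} [AddCommMonoid M] (f : ℕ → M) (m : ℕ) :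
    ∑ i ∈ Icc 1 m, f i = ∑ k ∈ range m, f (k + 1) := by
  rw [range_eq_Ico, sum_Ico_add', zero_add, Ico_add_one_right_eq_Icc]

theorem stmt_7_general (β : ℝ) (hβ : 1 < β) (M F : ℕ → ℕ)
    (hM : Tendsto M atTop atTop) (hF : Tendsto F atTop atTop) :
    Tendsto (fun n : ℕ =>
        ∑ i ∈ Icc 1 (M n),
          ((F n : ℝ) - 1) * ((i : ℝ) ^ (-β) / ∑ j ∈ Icc 1 n, (j : ℝ) ^ (-β)) ^ 2 /
            (1 + ((F n : ℝ) - 1) * ((i : ℝ) ^ (-β) / ∑ j ∈ Icc 1 n, (j : ℝ) ^ (-β))))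
      atTop (nhds 1) := by
  set w : ℕ → ℝ := fun k => ((k + 1 : ℕ) : ℝ) ^ (-β)
  have hws : Summable w := (summable_nat_add_iff 1).2 (Real.summable_nat_rpow.2 (by linarith))
  have hL : 0 < ∑' k, w k := hws.tsum_pos (fun k => by positivity) 0 (by simp [w])
  have hc : Tendsto (fun n => (F n : ℝ) - 1) atTop atTop :=
    tendsto_atTop_add_const_right _ _ (tendsto_natCast_atTop_atTop.comp hF)
  simpa only [lpHitTerm, sum_Icc_one_eq_sum_range] using
    tendsto_sum_lpHitTerm_of_summable (fun k => by positivity) hws hL hws.hasSum.tendsto_sum_nat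
      hM hc

/-- Asymptotic optimality of the LP policy: with Zipf(β) requests, β > 1,
cache size M(n) = ω(1) (with M(n) ≤ n) and freshness parameter F(n) = ω(1),
the LP hit probability P_LP(n) = ∑_{i=1}^{M(n)} (F(n)-1)p_i²/(1+(F(n)-1)p_i)
tends to 1 as n → ∞, where p_i = i^{-β}/∑_{j=1}^n j^{-β}. -/
theorem stmt_7 (β : ℝ) (hβ : 1 < β) (M F : ℕ → ℕ)
    (hMn : ∀ n, M n ≤ n)
    (hM : Tendsto M atTop atTop) (hF : Tendsto F atTop atTop) :
    Tendsto (fun n : ℕ =>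
        ∑ i ∈ Icc 1 (M n),
          ((F n : ℝ) - 1) * ((i : ℝ) ^ (-β) / ∑ j ∈ Icc 1 n, (j : ℝ) ^ (-β)) ^ 2 /
            (1 + ((F n : ℝ) - 1) * ((i : ℝ) ^ (-β) / ∑ j ∈ Icc 1 n, (j : ℝ) ^ (-β))))
      atTop (nhds 1) :=
  stmt_7_general β hβ M F hM hF
end

section
/- Under the scaling M(n) = O(F(n)^{1/β}) with β > 1, the LP hit probability satisfies P_LP(n) ≥ 1 - (1/0.9)(M(n)^{1-β} - n^{1-β}) - M(n)/(F(n)-1), and hence 1 - P_LP(n) = O(M(n)^{1-β}). -/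
/-!
The miss probability `1 - P_LP(n)` splits into the Zipf mass of the uncached items `i > M`
and the stale-hit term `∑_{i ≤ M} p_i / (1 + (F - 1) p_i)`. Comparing sums with `∫ x^{-β}`,
the unnormalised tail is at most `(M^{1-β} - n^{1-β}) / (β - 1)`, while the normaliser `S_n`
satisfies `(β - 1) S_n ≥ 1 - (n + 1)^{1-β} ≥ 0.9` for large `n`; each stale-hit term is at most
`1 / (F - 1)`. Finally `M = O(F^{1/β})` gives `M^β = O(F)`, so
`M / (F - 1) = M^{1-β} · M^β / (F - 1) = O(M^{1-β})`.
-/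

open Finset Filter Asymptotics

/-- Zipf probability p_i = i^{-β} / ∑_{j=1}^n j^{-β}. -/
noncomputable def zipfP (β : ℝ) (n i : ℕ) : ℝ :=
  (i : ℝ) ^ (-β) / ∑ j ∈ Icc 1 n, (j : ℝ) ^ (-β)

/-- LP hit probability with cache size M and freshness parameter F:
P_LP(n) = ∑_{i=1}^{M(n)} p_i − ∑_{i=1}^{M(n)} p_i/(1+(F(n)−1)p_i). -/
noncomputable def PLP (β : ℝ) (M F : ℕ → ℕ) (n : ℕ) : ℝ :=
  (∑ i ∈ Icc 1 (M n), zipfP β n i) -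
    ∑ i ∈ Icc 1 (M n), zipfP β n i / (1 + ((F n : ℝ) - 1) * zipfP β n i)

section RpowSums

variable {β : ℝ}

lemma integral_rpow_neg (hβ : β ≠ 1) {a b : ℝ} (ha : 0 < a) (hab : a ≤ b) :
    ∫ x in a..b, x ^ (-β) = (a ^ (1 - β) - b ^ (1 - β)) / (β - 1) := by
  have h0 : (0 : ℝ) ∉ Set.uIcc a b := by
    rw [Set.uIcc_of_le hab]
    exact fun h => ha.not_ge h.1
  rw [integral_rpow (Or.inr ⟨fun h => hβ (by linarith), h0⟩), show -β + 1 = 1 - β by ring,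
    div_eq_div_iff (sub_ne_zero.mpr hβ.symm) (sub_ne_zero.mpr hβ)]
  ring

lemma antitoneOn_rpow_neg (hβ : 0 ≤ β) : AntitoneOn (fun x : ℝ => x ^ (-β)) (Set.Ici 1) :=
  fun _ hx _ _ hxy =>
    Real.rpow_le_rpow_of_nonpos (zero_lt_one.trans_le hx) hxy (neg_nonpos.mpr hβ)

lemma sum_Ioc_rpow_neg_le (hβ₀ : 0 ≤ β) (hβ₁ : β ≠ 1) {m n : ℕ} (hm : 1 ≤ m) (hmn : m ≤ n) :
    ∑ i ∈ Ioc m n, (i : ℝ) ^ (-β) ≤ ((m : ℝ) ^ (1 - β) - (n : ℝ) ^ (1 - β)) / (β - 1) := by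
  have hanti : AntitoneOn (fun x : ℝ => x ^ (-β)) (Set.Icc (m : ℝ) n) :=
    (antitoneOn_rpow_neg hβ₀).mono fun x hx => (Nat.one_le_cast.mpr hm).trans hx.1
  rw [← Ico_add_one_add_one_eq_Ioc, ← sum_Ico_add']
  calc ∑ i ∈ Ico m n, ((i + 1 : ℕ) : ℝ) ^ (-β)
      ≤ ∫ x in (m : ℝ)..n, x ^ (-β) := hanti.sum_le_integral_Ico hmn
    _ = _ := integral_rpow_neg hβ₁ (Nat.cast_pos.mpr hm) (Nat.cast_le.mpr hmn)

lemma le_sum_Icc_rpow_neg (hβ₀ : 0 ≤ β) (hβ₁ : β ≠ 1) (n : ℕ) :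
    (1 - ((n : ℝ) + 1) ^ (1 - β)) / (β - 1) ≤ ∑ j ∈ Icc 1 n, (j : ℝ) ^ (-β) := by
  have hanti : AntitoneOn (fun x : ℝ => x ^ (-β)) (Set.Icc ((1 : ℕ) : ℝ) ((n + 1 : ℕ) : ℝ)) :=
    (antitoneOn_rpow_neg hβ₀).mono fun x hx => by simpa using hx.1
  have h := hanti.integral_le_sum_Ico (by omega)
  rw [integral_rpow_neg hβ₁ (by norm_num) (by push_cast; linarith)] at h
  push_cast at h
  simpa [Real.one_rpow, ← Ico_add_one_right_eq_Icc] using h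

lemma eventually_add_one_rpow_le (hβ : 1 < β) {ε : ℝ} (hε : 0 < ε) :
    ∀ᶠ n : ℕ in atTop, ((n : ℝ) + 1) ^ (1 - β) ≤ ε := by
  have h := (tendsto_rpow_neg_atTop (sub_pos.mpr hβ)).comp
    (tendsto_atTop_add_const_right _ 1 tendsto_natCast_atTop_atTop)
  rw [neg_sub] at h
  exact h.eventually (ge_mem_nhds hε)

end RpowSums

lemma div_one_add_mul_le_inv {p c : ℝ} (hp : 0 ≤ p) (hc : 0 < c) : p / (1 + c * p) ≤ c⁻¹ := by
  rw [div_le_iff₀ (by positivity), inv_mul_eq_div, le_div_iff₀ hc]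
  linarith

lemma sum_div_one_add_mul_le {ι : Type*} (s : Finset ι) {p : ι → ℝ} (hp : ∀ i ∈ s, 0 ≤ p i)
    {c : ℝ} (hc : 0 < c) : ∑ i ∈ s, p i / (1 + c * p i) ≤ #s / c :=
  calc ∑ i ∈ s, p i / (1 + c * p i) ≤ ∑ _i ∈ s, c⁻¹ :=
        sum_le_sum fun i hi => div_one_add_mul_le_inv (hp i hi) hc
    _ = #s / c := by rw [sum_const, nsmul_eq_mul, div_eq_mul_inv]

lemma isBigO_div_of_isBigO_rpow {α : Type*} {l : Filter α} {β : ℝ} (hβ : 0 < β) {m f : α → ℝ}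
    (hm : ∀ᶠ x in l, 0 < m x) (hf : ∀ᶠ x in l, 0 ≤ f x) (h : m =O[l] fun x => f x ^ (1 / β)) :
    (fun x => m x / f x) =O[l] fun x => m x ^ (1 - β) := by
  obtain ⟨c, hc, hbound⟩ := h.exists_pos
  refine IsBigO.of_bound (c ^ β) ?_
  filter_upwards [hbound.bound, hm, hf] with x hx hmx hfx
  rw [Real.norm_of_nonneg hmx.le, Real.norm_of_nonneg (by positivity)] at hx
  rw [Real.norm_of_nonneg (by positivity), Real.norm_of_nonneg (by positivity)]
  rcases hfx.eq_or_lt with hf0 | hfpos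
  · rw [← hf0, div_zero]; positivity
  have hmβ : m x ^ β ≤ c ^ β * f x :=
    calc m x ^ β ≤ (c * f x ^ (1 / β)) ^ β := by gcongr
      _ = c ^ β * f x := by
        rw [Real.mul_rpow hc.le (by positivity), ← Real.rpow_mul hfx, one_div_mul_cancel hβ.ne',
          Real.rpow_one]
  calc m x / f x = m x ^ (1 - β) * (m x ^ β / f x) := by
        rw [mul_div_assoc', ← Real.rpow_add hmx, sub_add_cancel, Real.rpow_one]
    _ ≤ m x ^ (1 - β) * c ^ β := by gcongr; rwa [div_le_iff₀ hfpos]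
    _ = c ^ β * m x ^ (1 - β) := mul_comm _ _

lemma isBigO_self_sub_one {α : Type*} {l : Filter α} {f : α → ℝ} (hf : Tendsto f l atTop) :
    f =O[l] fun x => f x - 1 := by
  refine IsBigO.of_bound 2 ?_
  filter_upwards [hf.eventually_ge_atTop 2] with x hx
  rw [Real.norm_of_nonneg (by linarith), Real.norm_of_nonneg (by linarith)]
  linarith

section Zipf

variable {β : ℝ} {n : ℕ}

lemma zipfP_nonneg (β : ℝ) (n i : ℕ) : 0 ≤ zipfP β n i := by
  unfold zipfP; positivity

lemma sum_Icc_zipfP (hn : 1 ≤ n) : ∑ i ∈ Icc 1 n, zipfP β n i = 1 := by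
  have hpos : 0 < ∑ j ∈ Icc 1 n, (j : ℝ) ^ (-β) :=
    sum_pos' (fun j _ => by positivity) ⟨1, by simp [hn]⟩
  simp only [zipfP, ← sum_div, div_self hpos.ne']

lemma sum_Ioc_zipfP_le (hβ : 1 < β) {c : ℝ} (hc : 0 < c) (hn : ((n : ℝ) + 1) ^ (1 - β) ≤ 1 - c)
    {m : ℕ} (hm : 1 ≤ m) (hmn : m ≤ n) :
    ∑ i ∈ Ioc m n, zipfP β n i ≤ (1 / c) * ((m : ℝ) ^ (1 - β) - (n : ℝ) ^ (1 - β)) := by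
  have hβ₀ : 0 ≤ β := by linarith
  have hβ₁ : 0 < β - 1 := by linarith
  set S := ∑ j ∈ Icc 1 n, (j : ℝ) ^ (-β)
  have hS : c ≤ (β - 1) * S := by
    have := le_sum_Icc_rpow_neg hβ₀ hβ.ne' n
    rw [div_le_iff₀' hβ₁] at this
    linarith
  have hT := sum_Ioc_rpow_neg_le hβ₀ hβ.ne' hm hmn
  have hD : 0 ≤ (m : ℝ) ^ (1 - β) - (n : ℝ) ^ (1 - β) := by
    have := Real.rpow_le_rpow_of_nonpos (Nat.cast_pos.mpr hm) (Nat.cast_le.mpr hmn)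
      (by linarith : 1 - β ≤ 0)
    linarith
  calc ∑ i ∈ Ioc m n, zipfP β n i = (∑ i ∈ Ioc m n, (i : ℝ) ^ (-β)) / S := by
        simp only [zipfP, sum_div, S]
    _ ≤ ((m : ℝ) ^ (1 - β) - (n : ℝ) ^ (1 - β)) / ((β - 1) * S) := by
        rw [← div_div]; gcongr
    _ ≤ _ := by rw [one_div_mul_eq_div]; gcongr

lemma one_sub_PLP_eq {M F : ℕ → ℕ} (hn : 1 ≤ n) (hMn : M n ≤ n) :
    1 - PLP β M F n = ∑ i ∈ Ioc (M n) n, zipfP β n i +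
      ∑ i ∈ Icc 1 (M n), zipfP β n i / (1 + ((F n : ℝ) - 1) * zipfP β n i) := by
  have hsplit := sum_Ioc_consecutive (zipfP β n) (Nat.zero_le (M n)) hMn
  rw [← Icc_add_one_left_eq_Ioc 0 (M n), ← Icc_add_one_left_eq_Ioc 0 n, zero_add,
    sum_Icc_zipfP hn] at hsplit
  rw [PLP, ← hsplit]
  ring

lemma one_sub_PLP_nonneg {M F : ℕ → ℕ} (hn : 1 ≤ n) (hMn : M n ≤ n) (hF : (1 : ℝ) ≤ F n) :
    0 ≤ 1 - PLP β M F n := by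
  have hF₀ : (0 : ℝ) ≤ F n - 1 := by linarith
  rw [one_sub_PLP_eq hn hMn]
  exact add_nonneg (sum_nonneg fun i _ => zipfP_nonneg β n i) (sum_nonneg fun i _ =>
    div_nonneg (zipfP_nonneg β n i) (add_nonneg zero_le_one (mul_nonneg hF₀ (zipfP_nonneg β n i))))

lemma one_sub_PLP_le (hβ : 1 < β) {c : ℝ} (hc : 0 < c) (hn : ((n : ℝ) + 1) ^ (1 - β) ≤ 1 - c)
    {M F : ℕ → ℕ} (hM : 1 ≤ M n) (hMn : M n ≤ n) (hF : (1 : ℝ) < F n) :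
    1 - PLP β M F n ≤
      (1 / c) * ((M n : ℝ) ^ (1 - β) - (n : ℝ) ^ (1 - β)) + (M n : ℝ) / ((F n : ℝ) - 1) := by
  have hstale := sum_div_one_add_mul_le (Icc 1 (M n)) (fun i _ => zipfP_nonneg β n i)
    (sub_pos.mpr hF)
  rw [Nat.card_Icc, Nat.add_sub_cancel] at hstale
  rw [one_sub_PLP_eq (hM.trans hMn) hMn]
  exact add_le_add (sum_Ioc_zipfP_le hβ hc hn hM hMn) hstale

end Zipf

theorem stmt_8_general (β : ℝ) (hβ : 1 < β) (M F : ℕ → ℕ)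
    (hM1 : ∀ n, 1 ≤ M n) (hMn : ∀ n, M n ≤ n)
    (hF : Tendsto F atTop atTop)
    (hMO : (fun n => (M n : ℝ)) =O[atTop] fun n => (F n : ℝ) ^ (1 / β)) :
    (∀ᶠ n in atTop,
        1 - (1 / 0.9) * ((M n : ℝ) ^ (1 - β) - (n : ℝ) ^ (1 - β)) -
            (M n : ℝ) / ((F n : ℝ) - 1) ≤ PLP β M F n) ∧
    (fun n => 1 - PLP β M F n) =O[atTop] fun n => (M n : ℝ) ^ (1 - β) := by
  have hFreal : Tendsto (fun n => (F n : ℝ)) atTop atTop :=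
    tendsto_natCast_atTop_atTop.comp hF
  have hF2 : ∀ᶠ n in atTop, (2 : ℝ) ≤ F n := hFreal.eventually_ge_atTop 2
  have hupper : ∀ᶠ n in atTop, 1 - PLP β M F n ≤
      (1 / 0.9) * ((M n : ℝ) ^ (1 - β) - (n : ℝ) ^ (1 - β)) + (M n : ℝ) / ((F n : ℝ) - 1) := by
    filter_upwards [eventually_add_one_rpow_le hβ (by norm_num : (0 : ℝ) < 1 - 0.9), hF2]
      with n hn hFn
    exact one_sub_PLP_le hβ (by norm_num) hn (hM1 n) (hMn n) (by linarith)
  refine ⟨hupper.mono fun n h => by linarith, ?_⟩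
  have hstale : (fun n => (M n : ℝ) / ((F n : ℝ) - 1)) =O[atTop] fun n => (M n : ℝ) ^ (1 - β) :=
    isBigO_div_of_isBigO_rpow (by linarith) (.of_forall fun n => Nat.cast_pos.mpr (hM1 n))
      (hF2.mono fun n hn => by linarith)
      (hMO.trans ((isBigO_self_sub_one hFreal).rpow (by positivity)
        (hF2.mono fun n hn => by simp only [Pi.zero_apply]; linarith)))
  refine (IsBigO.of_norm_eventuallyLE ?_).trans ((isBigO_const_mul_self (1 / 0.9) _ _).add hstale)
  filter_upwards [hupper, hF2, eventually_ge_atTop 1] with n hle hFn hn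
  have hn_rpow : 0 ≤ (n : ℝ) ^ (1 - β) := by positivity
  rw [Real.norm_of_nonneg (one_sub_PLP_nonneg hn (hMn n) (by linarith))]
  linarith

/-- Under the scaling M(n) = O(F(n)^{1/β}) with β > 1, the LP hit probability
satisfies (for large n) P_LP(n) ≥ 1 − (1/0.9)(M(n)^{1-β} − n^{1-β}) − M(n)/(F(n)−1),
and hence 1 − P_LP(n) = O(M(n)^{1-β}). -/
theorem stmt_8 (β : ℝ) (hβ : 1 < β) (M F : ℕ → ℕ)
    (hM1 : ∀ n, 1 ≤ M n) (hMn : ∀ n, M n ≤ n)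
    (hF : Tendsto F atTop atTop) (hM : Tendsto M atTop atTop)
    (hMO : (fun n => (M n : ℝ)) =O[atTop] fun n => (F n : ℝ) ^ (1 / β)) :
    (∀ᶠ n in atTop,
        1 - (1 / 0.9) * ((M n : ℝ) ^ (1 - β) - (n : ℝ) ^ (1 - β)) -
            (M n : ℝ) / ((F n : ℝ) - 1) ≤ PLP β M F n) ∧
    (fun n => 1 - PLP β M F n) =O[atTop] fun n => (M n : ℝ) ^ (1 - β) :=
  stmt_8_general β hβ M F hM1 hMn hF hMO
end
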